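/- Let $k \geq 1$, $\alpha > 0$, and $x_1,\dots,x_k \geq 0$. Then $\Phi_2^{(k)}\!\left[\tfrac{1}{k},\dots,\tfrac{1}{k};\alpha+1;\tfrac{x_1}{2},\dots,\tfrac{x_k}{2}\right] \leq {}_1F_1\!\left[1;\alpha+1;\tfrac{\|\mathbf{x}\|}{2}\right] \leq e^{\|\mathbf{x}\|/2}$, where $\|\mathbf{x}\| := \max_{1\leq j\leq k}|x_j|$. -/

import Mathlib

open scoped BigOperators
open MeasureTheory

/-- The rising factorial (Pochhammer symbol) `(a)_m = a (a+1) ⋯ (a+m-1)`. -/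
noncomputable def risingFactorial (a : ℝ) (m : ℕ) : ℝ := (ascPochhammer ℝ m).eval a

/-- The classical Laguerre polynomial `L_n^{(α)}(x)`. -/
noncomputable def laguerreP (n : ℕ) (α : ℝ) (x : ℝ) : ℝ :=
  risingFactorial (α + 1) n / (Nat.factorial n : ℝ) *
    ∑ j ∈ Finset.range (n + 1),
      risingFactorial (-(n : ℝ)) j / risingFactorial (α + 1) j * x ^ j / (Nat.factorial j : ℝ)

/-- Erdélyi's multivariate Laguerre polynomial `L_{n_1,…,n_k}^{(α)}(x_1,…,x_k)`. -/
noncomputable def mvLaguerre (k : ℕ) (α : ℝ) (n : Fin k → ℕ) (x : Fin k → ℝ) : ℝ :=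
  risingFactorial (α + 1) (∑ i, n i) / (∏ i, (Nat.factorial (n i) : ℝ)) *
    ∑ j ∈ Fintype.piFinset (fun i => Finset.range (n i + 1)),
      (∏ i, risingFactorial (-(n i : ℝ)) (j i)) / risingFactorial (α + 1) (∑ i, j i) *
        ∏ i, x i ^ (j i) / (Nat.factorial (j i) : ℝ)

/-- The confluent Lauricella function `Φ₂^{(k)}[b₁,…,b_k; c; x₁,…,x_k]`. -/
noncomputable def Phi2 (k : ℕ) (b : Fin k → ℝ) (c : ℝ) (x : Fin k → ℝ) : ℝ :=
  ∑' j : Fin k → ℕ,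
    (∏ i, risingFactorial (b i) (j i)) / risingFactorial c (∑ i, j i) *
      ∏ i, x i ^ (j i) / (Nat.factorial (j i) : ℝ)

/-- The confluent hypergeometric function `₁F₁[a; c; x]`. -/
noncomputable def oneF1 (a c x : ℝ) : ℝ :=
  ∑' j : ℕ, risingFactorial a j / risingFactorial c j * x ^ j / (Nat.factorial j : ℝ)

/-- Rooney's constant `q_n = √((2n)!) / (2^{n+1/2} n!)`. -/
noncomputable def qSeq (n : ℕ) : ℝ :=
  Real.sqrt (Nat.factorial (2 * n) : ℝ) /
    ((2 : ℝ) ^ ((n : ℝ) + 1 / 2) * (Nat.factorial n : ℝ))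

/-- The open standard simplex `E_k ⊆ ℝ^k`. -/
def simplexE (k : ℕ) : Set (Fin k → ℝ) := {u | (∀ i, 0 < u i) ∧ ∑ i, u i < 1}

/-- The density of the Dirichlet measure `μ_{(b₁,…,b_k,β)}` with respect to
Lebesgue measure on the simplex `E_k`. -/
noncomputable def dirichletDensity (k : ℕ) (b : Fin k → ℝ) (β : ℝ) (u : Fin k → ℝ) : ℝ :=
  Real.Gamma (∑ i, b i + β) / ((∏ i, Real.Gamma (b i)) * Real.Gamma β) *
    (∏ i, u i ^ (b i - 1)) * (1 - ∑ i, u i) ^ (β - 1)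

/-!
Group the multi-indices of the Lauricella series by total degree `n`. On the degree-`n` part
the monomial `∏ (x_i/2)^{j_i}` is at most `t^n`, where `t = ‖x‖/2`, and the remaining
coefficients add up, by the multinomial Chu–Vandermonde identity
`∑_{|j| = n} ∏ (b_i)_{j_i} / j_i! = (b_1 + ⋯ + b_k)_n / n!`, to the `n`-th coefficient of the
`₁F₁` series with `a = ∑ b_i = 1`. Finally `(1)_n = n! ≤ (α+1)_n` bounds that `₁F₁` series
termwise by the exponential series.
-/

open Finset

theorem Finset.Nat.sum_antidiagonalTuple_succ {M : Type*} [AddCommMonoid M] (k n : ℕ)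
    (f : (Fin (k + 1) → ℕ) → M) :
    ∑ j ∈ Nat.antidiagonalTuple (k + 1) n, f j =
      ∑ ij ∈ antidiagonal n, ∑ j ∈ Nat.antidiagonalTuple k ij.2, f (Fin.cons ij.1 j) := by
  change ((Multiset.Nat.antidiagonalTuple (k + 1) n).map f).sum =
    ((Multiset.Nat.antidiagonal n).map fun ij =>
      ((Multiset.Nat.antidiagonalTuple k ij.2).map fun j => f (Fin.cons ij.1 j)).sum).sum
  simp [Multiset.Nat.antidiagonalTuple, List.Nat.antidiagonalTuple, Multiset.Nat.antidiagonal,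
    List.flatMap_def, List.sum_flatten, Function.comp_def]

theorem tsum_le_tsum_of_sum_antidiagonalTuple_le {k : ℕ} {f : (Fin k → ℕ) → ℝ} {g : ℕ → ℝ}
    (hf : ∀ j, 0 ≤ f j) (hg : Summable g)
    (hfg : ∀ n, ∑ j ∈ Nat.antidiagonalTuple k n, f j ≤ g n) :
    ∑' j, f j ≤ ∑' n, g n := by
  have hg_nonneg n : 0 ≤ g n := (sum_nonneg fun j _ => hf j).trans (hfg n)
  refine tsum_le_of_sum_le' (tsum_nonneg hg_nonneg) fun s => ?_
  calc ∑ j ∈ s, f j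
      = ∑ n ∈ s.image (fun j => ∑ i, j i), ∑ j ∈ s with ∑ i, j i = n, f j :=
        (sum_fiberwise_of_maps_to (fun j hj => mem_image_of_mem _ hj) f).symm
    _ ≤ ∑ n ∈ s.image (fun j => ∑ i, j i), ∑ j ∈ Nat.antidiagonalTuple k n, f j := by
        refine sum_le_sum fun n _ => sum_le_sum_of_subset_of_nonneg ?_ fun j _ _ => hf j
        intro j hj
        exact Nat.mem_antidiagonalTuple.mpr (mem_filter.mp hj).2
    _ ≤ ∑ n ∈ s.image (fun j => ∑ i, j i), g n := sum_le_sum fun n _ => hfg n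
    _ ≤ ∑' n, g n := hg.sum_le_tsum _ fun n _ => hg_nonneg n

namespace Ring

variable {R : Type*} [CommRing R] [BinomialRing R]

theorem multichoose_add (r s : R) (n : ℕ) :
    multichoose (r + s) n = ∑ ij ∈ antidiagonal n, multichoose r ij.1 * multichoose s ij.2 := by
  -- `choose (-r) n = (-1)^n • multichoose r n` reduces this to Chu–Vandermonde for `choose`.
  apply (smul_left_cancel_iff (Int.negOnePow n)).mp
  rw [← choose_neg', neg_add, add_choose_eq n (Commute.all _ _), smul_sum]
  refine sum_congr rfl fun ij hij => ?_
  rw [choose_neg', choose_neg', ← mem_antidiagonal.mp hij, Nat.cast_add, Int.negOnePow_add,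
    smul_mul_smul_comm]

theorem multichoose_sum {k : ℕ} (r : Fin k → R) (n : ℕ) :
    multichoose (∑ i, r i) n =
      ∑ j ∈ Nat.antidiagonalTuple k n, ∏ i, multichoose (r i) (j i) := by
  induction k generalizing n with
  | zero => cases n <;> simp [multichoose_zero_succ]
  | succ k ih =>
    rw [Fin.sum_univ_succ, multichoose_add, Nat.sum_antidiagonalTuple_succ]
    refine sum_congr rfl fun ij _ => ?_
    simp [ih, mul_sum, Fin.prod_univ_succ]

end Ring

theorem risingFactorial_div_factorial (a : ℝ) (n : ℕ) :
    risingFactorial a n / n.factorial = Ring.multichoose a n := by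
  rw [div_eq_iff (by positivity), risingFactorial, ← Polynomial.ascPochhammer_smeval_eq_eval,
    ← Ring.factorial_nsmul_multichoose_eq_ascPochhammer, nsmul_eq_mul, mul_comm]

theorem risingFactorial_nonneg {a : ℝ} (ha : 0 ≤ a) (n : ℕ) : 0 ≤ risingFactorial a n := by
  induction n with
  | zero => simp [risingFactorial]
  | succ n ih =>
    rw [risingFactorial, ascPochhammer_succ_eval]
    exact mul_nonneg ih (by positivity)

theorem risingFactorial_le_risingFactorial {a c : ℝ} (ha : 0 ≤ a) (hac : a ≤ c) (n : ℕ) :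
    risingFactorial a n ≤ risingFactorial c n := by
  induction n with
  | zero => simp [risingFactorial]
  | succ n ih =>
    simp only [risingFactorial, ascPochhammer_succ_eval] at ih ⊢
    exact mul_le_mul ih (by linarith) (by positivity) ((risingFactorial_nonneg ha n).trans ih)

theorem sum_antidiagonalTuple_prod_risingFactorial_div_factorial {k : ℕ} (b : Fin k → ℝ) (n : ℕ) :
    ∑ j ∈ Nat.antidiagonalTuple k n, ∏ i, risingFactorial (b i) (j i) / (j i).factorial =
      risingFactorial (∑ i, b i) n / n.factorial := by
  simp only [risingFactorial_div_factorial, Ring.multichoose_sum]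

noncomputable def oneF1Term (a c x : ℝ) (n : ℕ) : ℝ :=
  risingFactorial a n / risingFactorial c n * x ^ n / (Nat.factorial n : ℝ)

noncomputable def phi2Term (k : ℕ) (b : Fin k → ℝ) (c : ℝ) (x : Fin k → ℝ) (j : Fin k → ℕ) : ℝ :=
  (∏ i, risingFactorial (b i) (j i)) / risingFactorial c (∑ i, j i) *
    ∏ i, x i ^ (j i) / (Nat.factorial (j i) : ℝ)

section oneF1

variable {a c x : ℝ}

theorem oneF1Term_nonneg (ha : 0 ≤ a) (hac : a ≤ c) (hx : 0 ≤ x) (n : ℕ) :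
    0 ≤ oneF1Term a c x n := by
  have := risingFactorial_nonneg ha n
  have := risingFactorial_nonneg (ha.trans hac) n
  unfold oneF1Term
  positivity

theorem oneF1Term_le_pow_div_factorial (ha : 0 ≤ a) (hac : a ≤ c) (hx : 0 ≤ x) (n : ℕ) :
    oneF1Term a c x n ≤ x ^ n / n.factorial := by
  have hratio : risingFactorial a n / risingFactorial c n ≤ 1 :=
    div_le_one_of_le₀ (risingFactorial_le_risingFactorial ha hac n)
      (risingFactorial_nonneg (ha.trans hac) n)
  calc oneF1Term a c x n ≤ 1 * x ^ n / n.factorial := by unfold oneF1Term; gcongr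
    _ = x ^ n / n.factorial := by rw [one_mul]

theorem summable_oneF1Term (ha : 0 ≤ a) (hac : a ≤ c) (hx : 0 ≤ x) :
    Summable (oneF1Term a c x) :=
  (Real.summable_pow_div_factorial x).of_nonneg_of_le (oneF1Term_nonneg ha hac hx)
    (oneF1Term_le_pow_div_factorial ha hac hx)

theorem oneF1_le_exp (ha : 0 ≤ a) (hac : a ≤ c) (hx : 0 ≤ x) : oneF1 a c x ≤ Real.exp x := by
  rw [Real.exp_eq_exp_ℝ, NormedSpace.exp_eq_tsum_div]
  exact (summable_oneF1Term ha hac hx).tsum_le_tsum (oneF1Term_le_pow_div_factorial ha hac hx)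
    (Real.summable_pow_div_factorial x)

end oneF1

section Phi2

variable {k : ℕ} {b : Fin k → ℝ} {c : ℝ} {x : Fin k → ℝ} {t : ℝ}

theorem phi2Term_nonneg (hb : ∀ i, 0 ≤ b i) (hc : 0 ≤ c) (hx : ∀ i, 0 ≤ x i) (j : Fin k → ℕ) :
    0 ≤ phi2Term k b c x j :=
  mul_nonneg (div_nonneg (prod_nonneg fun i _ => risingFactorial_nonneg (hb i) (j i))
      (risingFactorial_nonneg hc _))
    (prod_nonneg fun i _ => div_nonneg (pow_nonneg (hx i) _) (Nat.cast_nonneg _))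

theorem phi2Term_le (hb : ∀ i, 0 ≤ b i) (hc : 0 ≤ c) (hx : ∀ i, 0 ≤ x i) (hxt : ∀ i, x i ≤ t)
    (j : Fin k → ℕ) :
    phi2Term k b c x j ≤ (∏ i, risingFactorial (b i) (j i) / (j i).factorial) *
      (t ^ (∑ i, j i) / risingFactorial c (∑ i, j i)) := by
  have hpow : ∏ i, x i ^ j i ≤ t ^ ∑ i, j i := by
    rw [← prod_pow_eq_pow_sum]
    exact prod_le_prod (fun i _ => pow_nonneg (hx i) _)
      fun i _ => pow_le_pow_left₀ (hx i) (hxt i) _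
  have hcoef : 0 ≤ ∏ i, risingFactorial (b i) (j i) / (j i).factorial :=
    prod_nonneg fun i _ => div_nonneg (risingFactorial_nonneg (hb i) (j i)) (Nat.cast_nonneg _)
  have := risingFactorial_nonneg hc (∑ i, j i)
  calc phi2Term k b c x j
      = (∏ i, risingFactorial (b i) (j i) / (j i).factorial) *
          ((∏ i, x i ^ j i) / risingFactorial c (∑ i, j i)) := by
        rw [phi2Term, prod_div_distrib, prod_div_distrib]
        ring
    _ ≤ _ := by gcongr

theorem sum_phi2Term_le_oneF1Term (hb : ∀ i, 0 ≤ b i) (hc : 0 ≤ c) (hx : ∀ i, 0 ≤ x i)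
    (hxt : ∀ i, x i ≤ t) (n : ℕ) :
    ∑ j ∈ Nat.antidiagonalTuple k n, phi2Term k b c x j ≤ oneF1Term (∑ i, b i) c t n := by
  calc ∑ j ∈ Nat.antidiagonalTuple k n, phi2Term k b c x j
      ≤ ∑ j ∈ Nat.antidiagonalTuple k n,
          (∏ i, risingFactorial (b i) (j i) / (j i).factorial) * (t ^ n / risingFactorial c n) := by
        refine sum_le_sum fun j hj => ?_
        rw [← Nat.mem_antidiagonalTuple.mp hj]
        exact phi2Term_le hb hc hx hxt j
    _ = oneF1Term (∑ i, b i) c t n := by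
        rw [← sum_mul, sum_antidiagonalTuple_prod_risingFactorial_div_factorial, oneF1Term]
        ring

theorem Phi2_le_oneF1 (hb : ∀ i, 0 ≤ b i) (hbc : ∑ i, b i ≤ c) (hx : ∀ i, 0 ≤ x i)
    (hxt : ∀ i, x i ≤ t) (ht : 0 ≤ t) : Phi2 k b c x ≤ oneF1 (∑ i, b i) c t := by
  have hb_sum : 0 ≤ ∑ i, b i := sum_nonneg fun i _ => hb i
  have hc : 0 ≤ c := hb_sum.trans hbc
  exact tsum_le_tsum_of_sum_antidiagonalTuple_le (phi2Term_nonneg hb hc hx)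
    (summable_oneF1Term hb_sum hbc ht) (sum_phi2Term_le_oneF1Term hb hc hx hxt)

end Phi2

/-- Inequality (2.8): the Lauricella function `Φ₂^{(k)}[1/k,…,1/k; α+1; x/2]` is bounded by
`₁F₁[1; α+1; ‖x‖/2] ≤ exp(‖x‖/2)`. -/
theorem Phi2_le_oneF1_le_exp (k : ℕ) (hk : 1 ≤ k) (α : ℝ) (hα : 0 < α)
    (x : Fin k → ℝ) (hx : ∀ i, 0 ≤ x i) :
    Phi2 k (fun _ => 1 / (k : ℝ)) (α + 1) (fun i => x i / 2) ≤
        oneF1 1 (α + 1) ((⨆ i, |x i|) / 2) ∧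
      oneF1 1 (α + 1) ((⨆ i, |x i|) / 2) ≤ Real.exp ((⨆ i, |x i|) / 2) := by
  set t := (⨆ i, |x i|) / 2
  have ht : 0 ≤ t := div_nonneg (Real.iSup_nonneg fun i => abs_nonneg (x i)) zero_le_two
  have hxt i : x i / 2 ≤ t := div_le_div_of_nonneg_right
    ((le_abs_self _).trans (le_ciSup (Set.finite_range fun i => |x i|).bddAbove i)) zero_le_two
  have hα1 : (1 : ℝ) ≤ α + 1 := by linarith
  have hb_sum : ∑ _i : Fin k, 1 / (k : ℝ) = 1 := by
    have : (k : ℝ) ≠ 0 := by positivity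
    simp [this]
  refine ⟨?_, oneF1_le_exp zero_le_one hα1 ht⟩
  simpa only [hb_sum] using Phi2_le_oneF1 (fun _ => by positivity) (hb_sum.trans_le hα1)
    (fun i => div_nonneg (hx i) zero_le_two) hxt ht
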